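/- arXiv:2405.07402 — 5 statements merged into one kernel-verified Lean document; each statement's English description precedes it below -/
import Mathlib

section
/- Let G be a finite connected multigraph with fixed spanning tree T, fundamental cycles γ₁,…,γ_g, dual basis ε₁,…,ε_g for N = H¹(G,ℤ), and universal length pairing valued in R = ℤ[x_e]. Let Θ(Υ) ∈ Λ³(N ⊗ R) denote the explicit Ceresa representative Θ(Υ) = Σᵢ εᵢ ∧ (2 Σ_{0≤k<j≤nᵢ−1} π(fᵢ(e_{i,k})e_{i,k}) ∧ π(fᵢ(e_{i,j})e_{i,j}) − 4 π(γᵢ) ∧ π(δᵢ)). Then the variable x_{eᵢ} does not appear in any coefficient of Θ(Υ), for any i ∈ {1,…,g}. -/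
/-!
In the explicit representative
`Θ(Υ) = Σᵢ εᵢ ∧ (2 Σ_{0≤k<j≤nᵢ−1} π(fᵢ(e_{i,k})e_{i,k}) ∧ π(fᵢ(e_{i,j})e_{i,j}) − 4 π(γᵢ) ∧ π(δᵢ))`,
the variable `x_{eᵢ}` of a non-tree edge does not appear in any coefficient, for any `i ∈ [g]`.
-/

open ExteriorAlgebra

/-- The simplicial boundary map `∂ : C₁(G,ℤ) → C₀(G,ℤ)`. -/
noncomputable def boundaryMap {V E : Type} [DecidableEq V]
    (src tgt : E → V) : (E →₀ ℤ) →ₗ[ℤ] (V →₀ ℤ) :=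
  Finsupp.lsum ℤ fun e =>
    LinearMap.toSpanSingleton ℤ _ (Finsupp.single (tgt e) 1 - Finsupp.single (src e) 1)

/-- The universal length pairing, valued in `R = ℤ[x_e : e ∈ E]`. -/
noncomputable def lengthPairing {E : Type} [Fintype E] (c c' : E →₀ ℤ) :
    MvPolynomial E ℤ :=
  ∑ e : E, (c e * c' e) • MvPolynomial.X e

/-- `π(c) = Σ_s [c, γ_s] ε_s`, in coordinates with respect to the dual basis `ε₁,…,ε_g`. -/
noncomputable def piCoords {E : Type} [Fintype E] {g : ℕ}
    (γ : Fin g → (E →₀ ℤ)) (c : E →₀ ℤ) : Fin g → MvPolynomial E ℤ :=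
  fun s => lengthPairing c (γ s)

variable {R : Type*} [CommRing R] {g : ℕ}

noncomputable def eps (g : ℕ) (R : Type*) [CommRing R] (i : Fin g) : Fin g → R :=
  Pi.single i (1 : R)

lemma iota_expand (v : Fin g → R) :
    ι R v = ∑ s : Fin g, v s • ι R (eps g R s) := by
  have hv : v = ∑ s : Fin g, v s • eps g R s := by
    ext j
    simp [eps, Finset.sum_apply, Pi.single_apply]
  calc ι R v = ι R (∑ s : Fin g, v s • eps g R s) := by rw [← hv]
    _ = ∑ s : Fin g, v s • ι R (eps g R s) := by
        rw [map_sum]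
        exact Finset.sum_congr rfl fun s _ => by rw [LinearMap.map_smul]

lemma iota_mul_expand (X Y : Fin g → R) :
    ι R X * ι R Y = ∑ a : Fin g, ∑ b : Fin g,
      (X a * Y b) • (ι R (eps g R a) * ι R (eps g R b)) := by
  rw [iota_expand X, iota_expand Y, Finset.sum_mul]
  refine Finset.sum_congr rfl fun a _ => ?_
  rw [Finset.mul_sum]
  refine Finset.sum_congr rfl fun b _ => ?_
  rw [smul_mul_assoc, mul_smul_comm, smul_smul]

noncomputable def Wdg (g : ℕ) (R : Type*) [CommRing R] (i j k : Fin g) :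
    ExteriorAlgebra R (Fin g → R) :=
  ι R (eps g R i) * ι R (eps g R j) * ι R (eps g R k)

lemma iota_anticomm (x y : Fin g → R) : ι R x * ι R y = -(ι R y * ι R x) :=
  eq_neg_of_add_eq_zero_left (ι_add_mul_swap x y)

lemma W_swap12 (i j k : Fin g) : Wdg g R j i k = -(Wdg g R i j k) := by
  unfold Wdg; rw [iota_anticomm (eps g R j) (eps g R i), neg_mul]

lemma W_swap23 (i j k : Fin g) : Wdg g R i k j = -(Wdg g R i j k) := by
  unfold Wdg
  rw [mul_assoc, mul_assoc, iota_anticomm (eps g R k) (eps g R j), mul_neg]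

lemma W_diag12 (i k : Fin g) : Wdg g R i i k = 0 := by
  unfold Wdg; rw [ι_sq_zero, zero_mul]

lemma W_diag23 (i j : Fin g) : Wdg g R i j j = 0 := by
  unfold Wdg; rw [mul_assoc, ι_sq_zero, mul_zero]

lemma W_diag13 (i j : Fin g) : Wdg g R i j i = 0 := by
  rw [W_swap23, W_swap12, W_diag12, neg_zero, neg_zero]

lemma sum3_swap12 {M : Type*} [AddCommMonoid M] (f : Fin g → Fin g → Fin g → M) :
    ∑ i : Fin g, ∑ j : Fin g, ∑ k : Fin g, f i j k
      = ∑ i : Fin g, ∑ j : Fin g, ∑ k : Fin g, f j i k :=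
  Finset.sum_comm

lemma sum3_swap23 {M : Type*} [AddCommMonoid M] (f : Fin g → Fin g → Fin g → M) :
    ∑ i : Fin g, ∑ j : Fin g, ∑ k : Fin g, f i j k
      = ∑ i : Fin g, ∑ j : Fin g, ∑ k : Fin g, f i k j :=
  Finset.sum_congr rfl fun _ _ => Finset.sum_comm

lemma sum3_cyc {M : Type*} [AddCommMonoid M] (f : Fin g → Fin g → Fin g → M) :
    ∑ i : Fin g, ∑ j : Fin g, ∑ k : Fin g, f i j k
      = ∑ i : Fin g, ∑ j : Fin g, ∑ k : Fin g, f k i j := by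
  rw [sum3_swap12, sum3_swap23]

lemma sum3_swap13 {M : Type*} [AddCommMonoid M] (f : Fin g → Fin g → Fin g → M) :
    ∑ i : Fin g, ∑ j : Fin g, ∑ k : Fin g, f i j k
      = ∑ i : Fin g, ∑ j : Fin g, ∑ k : Fin g, f k j i := by
  rw [sum3_swap12, sum3_swap23, sum3_swap12]

lemma sum3_cyc' {M : Type*} [AddCommMonoid M] (f : Fin g → Fin g → Fin g → M) :
    ∑ i : Fin g, ∑ j : Fin g, ∑ k : Fin g, f i j k
      = ∑ i : Fin g, ∑ j : Fin g, ∑ k : Fin g, f j k i := by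
  rw [sum3_swap23, sum3_swap12]

set_option maxHeartbeats 1000000 in
lemma sort3_pt (Φ : Fin g → Fin g → Fin g → R) (i j k : Fin g) :
    Φ i j k • Wdg g R i j k =
      (if i < j ∧ j < k then Φ i j k • Wdg g R i j k else 0)
      + (if i < k ∧ k < j then Φ i j k • Wdg g R i j k else 0)
      + (if j < i ∧ i < k then Φ i j k • Wdg g R i j k else 0)
      + (if j < k ∧ k < i then Φ i j k • Wdg g R i j k else 0)
      + (if k < i ∧ i < j then Φ i j k • Wdg g R i j k else 0)
      + (if k < j ∧ j < i then Φ i j k • Wdg g R i j k else 0) := by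
  by_cases e1 : i = j
  · subst e1; simp [W_diag12]
  by_cases e2 : j = k
  · subst e2; simp [W_diag23]
  by_cases e3 : i = k
  · subst e3; simp [W_diag13]
  simp only [Fin.lt_def, Fin.ext_iff] at e1 e2 e3 ⊢
  split_ifs <;> first | (exfalso; omega) | simp

lemma sort3 (Φ : Fin g → Fin g → Fin g → R) :
    ∑ i : Fin g, ∑ j : Fin g, ∑ k : Fin g, Φ i j k • Wdg g R i j k
      = ∑ i : Fin g, ∑ j : Fin g, ∑ k : Fin g,
          if i < j ∧ j < k then
            (Φ i j k - Φ i k j - Φ j i k + Φ j k i + Φ k i j - Φ k j i) • Wdg g R i j k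
          else 0 := by
  calc
    ∑ i : Fin g, ∑ j : Fin g, ∑ k : Fin g, Φ i j k • Wdg g R i j k
      = ∑ i : Fin g, ∑ j : Fin g, ∑ k : Fin g,
          ((if i < j ∧ j < k then Φ i j k • Wdg g R i j k else 0)
          + (if i < k ∧ k < j then Φ i j k • Wdg g R i j k else 0)
          + (if j < i ∧ i < k then Φ i j k • Wdg g R i j k else 0)
          + (if j < k ∧ k < i then Φ i j k • Wdg g R i j k else 0)
          + (if k < i ∧ i < j then Φ i j k • Wdg g R i j k else 0)
          + (if k < j ∧ j < i then Φ i j k • Wdg g R i j k else 0)) :=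
        Finset.sum_congr rfl fun i _ => Finset.sum_congr rfl fun j _ =>
          Finset.sum_congr rfl fun k _ => sort3_pt Φ i j k
    _ = (∑ i : Fin g, ∑ j : Fin g, ∑ k : Fin g,
          if i < j ∧ j < k then Φ i j k • Wdg g R i j k else 0)
      + ((∑ i : Fin g, ∑ j : Fin g, ∑ k : Fin g,
          if i < k ∧ k < j then Φ i j k • Wdg g R i j k else 0)
      + ((∑ i : Fin g, ∑ j : Fin g, ∑ k : Fin g,
          if j < i ∧ i < k then Φ i j k • Wdg g R i j k else 0)
      + ((∑ i : Fin g, ∑ j : Fin g, ∑ k : Fin g,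
          if j < k ∧ k < i then Φ i j k • Wdg g R i j k else 0)
      + ((∑ i : Fin g, ∑ j : Fin g, ∑ k : Fin g,
          if k < i ∧ i < j then Φ i j k • Wdg g R i j k else 0)
      + (∑ i : Fin g, ∑ j : Fin g, ∑ k : Fin g,
          if k < j ∧ j < i then Φ i j k • Wdg g R i j k else 0))))) := by
        simp only [Finset.sum_add_distrib]
        abel
    _ = ∑ i : Fin g, ∑ j : Fin g, ∑ k : Fin g,
          if i < j ∧ j < k then
            (Φ i j k - Φ i k j - Φ j i k + Φ j k i + Φ k i j - Φ k j i) • Wdg g R i j k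
          else 0 := by
        rw [sum3_swap23 (fun i j k => if i < k ∧ k < j then Φ i j k • Wdg g R i j k else 0),
            sum3_swap12 (fun i j k => if j < i ∧ i < k then Φ i j k • Wdg g R i j k else 0),
            sum3_cyc (fun i j k => if j < k ∧ k < i then Φ i j k • Wdg g R i j k else 0),
            sum3_cyc' (fun i j k => if k < i ∧ i < j then Φ i j k • Wdg g R i j k else 0),
            sum3_swap13 (fun i j k => if k < j ∧ j < i then Φ i j k • Wdg g R i j k else 0)]
        simp only [← Finset.sum_add_distrib]
        refine Finset.sum_congr rfl fun i _ => Finset.sum_congr rfl fun j _ =>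
          Finset.sum_congr rfl fun k _ => ?_
        by_cases h : i < j ∧ j < k
        · simp only [if_pos h]
          rw [W_swap23 i j k, W_swap12 i j k,
            show Wdg g R k i j = Wdg g R i j k by
              rw [show Wdg g R k i j = -Wdg g R i k j from W_swap12 i k j, W_swap23, neg_neg],
            show Wdg g R j k i = Wdg g R i j k by
              rw [show Wdg g R j k i = -Wdg g R j i k from W_swap23 j i k, W_swap12, neg_neg],
            show Wdg g R k j i = -Wdg g R i j k by
              rw [show Wdg g R k j i = -Wdg g R j k i from W_swap12 j k i,
                show Wdg g R j k i = -Wdg g R j i k from W_swap23 j i k, W_swap12, neg_neg]]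
          simp only [smul_neg, ← neg_smul, ← add_smul]
          congr 1
          ring
        · simp [h]

lemma ite_sum2 {M : Type*} [AddCommMonoid M] {c : Prop} [Decidable c]
    (f : Fin g → Fin g → M) :
    (if c then ∑ a : Fin g, ∑ b : Fin g, f a b else 0)
      = ∑ a : Fin g, ∑ b : Fin g, (if c then f a b else 0) := by
  by_cases h : c <;> simp [h]

lemma sum4_swap {M : Type*} [AddCommMonoid M] {α β : Type*} [Fintype α] [Fintype β]
    (f : α → α → β → β → M) :
    ∑ p : α, ∑ q : α, ∑ a : β, ∑ b : β, f p q a b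
      = ∑ a : β, ∑ b : β, ∑ p : α, ∑ q : α, f p q a b :=
  calc ∑ p : α, ∑ q : α, ∑ a : β, ∑ b : β, f p q a b
      = ∑ p : α, ∑ a : β, ∑ q : α, ∑ b : β, f p q a b :=
        Finset.sum_congr rfl fun _ _ => Finset.sum_comm
    _ = ∑ a : β, ∑ p : α, ∑ q : α, ∑ b : β, f p q a b := Finset.sum_comm
    _ = ∑ a : β, ∑ p : α, ∑ b : β, ∑ q : α, f p q a b :=
        Finset.sum_congr rfl fun _ _ => Finset.sum_congr rfl fun _ _ => Finset.sum_comm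
    _ = ∑ a : β, ∑ b : β, ∑ p : α, ∑ q : α, f p q a b :=
        Finset.sum_congr rfl fun _ _ => Finset.sum_comm

lemma theta_term_expand {N : ℕ} (i : Fin g) (P : Fin N → Fin g → R) (Q D : Fin g → R) :
    ι R (eps g R i) * ((2:ℤ) • (∑ p : Fin N, ∑ q : Fin N,
        if p < q then ι R (P p) * ι R (P q) else 0)
      - (4:ℤ) • (ι R Q * ι R D))
    = ∑ a : Fin g, ∑ b : Fin g,
        (2 * (∑ p : Fin N, ∑ q : Fin N, if p < q then P p a * P q b else 0)
          - 4 * (Q a * D b)) • Wdg g R i a b := by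
  have hS : (∑ p : Fin N, ∑ q : Fin N, if p < q then ι R (P p) * ι R (P q) else 0)
      = ∑ a : Fin g, ∑ b : Fin g,
          (∑ p : Fin N, ∑ q : Fin N, if p < q then P p a * P q b else 0)
            • (ι R (eps g R a) * ι R (eps g R b)) := by
    calc (∑ p : Fin N, ∑ q : Fin N, if p < q then ι R (P p) * ι R (P q) else 0)
        = ∑ p : Fin N, ∑ q : Fin N, ∑ a : Fin g, ∑ b : Fin g,
            (if p < q then (P p a * P q b) • (ι R (eps g R a) * ι R (eps g R b)) else 0) := by
          refine Finset.sum_congr rfl fun p _ => Finset.sum_congr rfl fun q _ => ?_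
          rw [iota_mul_expand, ite_sum2]
      _ = ∑ a : Fin g, ∑ b : Fin g, ∑ p : Fin N, ∑ q : Fin N,
            (if p < q then (P p a * P q b) • (ι R (eps g R a) * ι R (eps g R b)) else 0) :=
          sum4_swap _
      _ = ∑ a : Fin g, ∑ b : Fin g,
            (∑ p : Fin N, ∑ q : Fin N, if p < q then P p a * P q b else 0)
              • (ι R (eps g R a) * ι R (eps g R b)) := by
          refine Finset.sum_congr rfl fun a _ => Finset.sum_congr rfl fun b _ => ?_
          rw [Finset.sum_smul]
          refine Finset.sum_congr rfl fun p _ => ?_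
          rw [Finset.sum_smul]
          refine Finset.sum_congr rfl fun q _ => ?_
          rw [ite_smul, zero_smul]
  rw [hS, iota_mul_expand Q D]
  rw [← Int.cast_smul_eq_zsmul R (2:ℤ), ← Int.cast_smul_eq_zsmul R (4:ℤ)]
  rw [Finset.smul_sum, Finset.smul_sum, ← Finset.sum_sub_distrib, Finset.mul_sum]
  refine Finset.sum_congr rfl fun a _ => ?_
  rw [Finset.smul_sum, Finset.smul_sum, ← Finset.sum_sub_distrib, Finset.mul_sum]
  refine Finset.sum_congr rfl fun b _ => ?_
  rw [smul_smul, smul_smul, ← sub_smul, mul_smul_comm]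
  congr 1
  · push_cast
    ring
  · unfold Wdg
    rw [mul_assoc]

lemma novar_lengthPairing {E : Type} [Fintype E] [DecidableEq E]
    (c c' : E →₀ ℤ) (t : E) (h : c t * c' t = 0) :
    t ∉ (lengthPairing c c').vars := by
  intro hmem
  have h1 := MvPolynomial.vars_sum_subset
    (Finset.univ : Finset E) (fun f => (c f * c' f) • MvPolynomial.X f) hmem
  rw [Finset.mem_biUnion] at h1
  obtain ⟨f, -, hf⟩ := h1
  by_cases hft : f = t
  · subst hft
    rw [h, zero_smul] at hf
    simp at hf
  · have h2 : ((c f * c' f) • MvPolynomial.X f : MvPolynomial E ℤ).vars ⊆ {f} := by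
      rw [MvPolynomial.smul_eq_C_mul]
      refine (MvPolynomial.vars_mul _ _).trans ?_
      rw [MvPolynomial.vars_C, MvPolynomial.vars_X, Finset.empty_union]
    have := h2 hf
    simp at this
    exact hft this.symm

lemma novar_add {σ : Type*} [DecidableEq σ] {x y : MvPolynomial σ ℤ} {v : σ}
    (hx : v ∉ x.vars) (hy : v ∉ y.vars) : v ∉ (x + y).vars := fun h => by
  rcases Finset.mem_union.1 (MvPolynomial.vars_add_subset x y h) with h | h
  exacts [hx h, hy h]

lemma novar_sub {σ : Type*} [DecidableEq σ] {x y : MvPolynomial σ ℤ} {v : σ}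
    (hx : v ∉ x.vars) (hy : v ∉ y.vars) : v ∉ (x - y).vars := fun h => by
  rcases Finset.mem_union.1 (MvPolynomial.vars_sub_subset (p := x) (q := y) h) with h | h
  exacts [hx h, hy h]

lemma novar_mul {σ : Type*} [DecidableEq σ] {x y : MvPolynomial σ ℤ} {v : σ}
    (hx : v ∉ x.vars) (hy : v ∉ y.vars) : v ∉ (x * y).vars := fun h => by
  rcases Finset.mem_union.1 (MvPolynomial.vars_mul x y h) with h | h
  exacts [hx h, hy h]

lemma novar_two_mul {σ : Type*} [DecidableEq σ] {x : MvPolynomial σ ℤ} {v : σ}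
    (hx : v ∉ x.vars) : v ∉ ((2 : MvPolynomial σ ℤ) * x).vars := by
  rw [two_mul]; exact novar_add hx hx

lemma novar_four_mul {σ : Type*} [DecidableEq σ] {x : MvPolynomial σ ℤ} {v : σ}
    (hx : v ∉ x.vars) : v ∉ ((4 : MvPolynomial σ ℤ) * x).vars := by
  rw [show (4 : MvPolynomial σ ℤ) * x = 2 * x + 2 * x by ring]
  exact novar_add (novar_two_mul hx) (novar_two_mul hx)

lemma novar_sum {σ : Type*} [DecidableEq σ] {α : Type*} (s : Finset α)
    (f : α → MvPolynomial σ ℤ) {v : σ} (hf : ∀ a ∈ s, v ∉ (f a).vars) :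
    v ∉ (∑ a ∈ s, f a).vars := fun h => by
  obtain ⟨a, ha, hva⟩ := Finset.mem_biUnion.1 (MvPolynomial.vars_sum_subset s f h)
  exact hf a ha hva

set_option maxHeartbeats 3200000 in
theorem theta_upsilon_has_no_nontree_variable
    {V E : Type} [Fintype V] [Fintype E] [DecidableEq V] [DecidableEq E]
    (src tgt : E → V) (T : Finset E) {g : ℕ} (e : Fin g → E)
    -- `T` is a spanning tree:
    (hT : ∀ v w : V, Relation.ReflTransGen
      (fun a b => ∃ f ∈ T, (src f = a ∧ tgt f = b) ∨ (src f = b ∧ tgt f = a)) v w)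
    (hcard : T.card + 1 = Fintype.card V)
    -- `e₁,…,e_g` enumerate the non-tree edges:
    (he : Function.Injective e) (heT : ∀ i, e i ∉ T) (hcover : ∀ f ∉ T, ∃ i, e i = f)
    -- `γᵢ` is the fundamental cycle of `eᵢ`:
    (γ : Fin g → (E →₀ ℤ))
    (hγker : ∀ i, γ i ∈ LinearMap.ker (boundaryMap src tgt))
    (hγ1 : ∀ i, γ i (e i) = 1)
    (hγs : ∀ i, (((γ i).support : Set E)) ⊆ ↑T ∪ {e i})
    -- the paths `δᵢ` are supported in the tree `T`:
    (δ : Fin g → (E →₀ ℤ)) (hδ : ∀ i, (((δ i).support : Set E)) ⊆ ↑T)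
    -- `e_{i,0},…,e_{i,nᵢ−1}` enumerate the edges of the cycle `γᵢ` (in cyclic order):
    (n : Fin g → ℕ) (Ed : ∀ i, Fin (n i) → E)
    (hEdinj : ∀ i, Function.Injective (Ed i))
    (hEdsupp : ∀ i, (γ i).support = Finset.image (Ed i) Finset.univ) :
    ∃ c : Fin g → Fin g → Fin g → MvPolynomial E ℤ,
      ((∑ i : Fin g, ι (MvPolynomial E ℤ) (Pi.single i (1 : MvPolynomial E ℤ)) *
          ((2:ℤ) • (∑ k : Fin (n i), ∑ j : Fin (n i),
              if k < j then
                ι (MvPolynomial E ℤ)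
                    (piCoords γ (Finsupp.single (Ed i k) (γ i (Ed i k)))) *
                ι (MvPolynomial E ℤ)
                    (piCoords γ (Finsupp.single (Ed i j) (γ i (Ed i j))))
              else 0)
            - (4:ℤ) • (ι (MvPolynomial E ℤ) (piCoords γ (γ i)) *
                       ι (MvPolynomial E ℤ) (piCoords γ (δ i)))))
        = ∑ i : Fin g, ∑ j : Fin g, ∑ k : Fin g,
            if i < j ∧ j < k then
              c i j k • ((ι (MvPolynomial E ℤ) (Pi.single i (1 : MvPolynomial E ℤ)) *
                          ι (MvPolynomial E ℤ) (Pi.single j (1 : MvPolynomial E ℤ)) *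
                          ι (MvPolynomial E ℤ) (Pi.single k (1 : MvPolynomial E ℤ)) :
                  ExteriorAlgebra (MvPolynomial E ℤ) (Fin g → MvPolynomial E ℤ)))
            else 0) ∧
      (∀ i j k t, e t ∉ (c i j k).vars) := by
  classical
  set R := MvPolynomial E ℤ with hR
  set Φ : Fin g → Fin g → Fin g → R := fun i a b =>
    2 * (∑ p : Fin (n i), ∑ q : Fin (n i), if p < q then
        piCoords γ (Finsupp.single (Ed i p) (γ i (Ed i p))) a *
        piCoords γ (Finsupp.single (Ed i q) (γ i (Ed i q))) b else 0)
      - 4 * (piCoords γ (γ i) a * piCoords γ (δ i) b) with hΦdef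
  refine ⟨fun i j k => if i < j ∧ j < k then
      (Φ i j k - Φ i k j - Φ j i k + Φ j k i + Φ k i j - Φ k j i) else 0, ?_, ?_⟩
  · calc
      (∑ i : Fin g, ι R (Pi.single i (1 : R)) *
          ((2:ℤ) • (∑ k : Fin (n i), ∑ j : Fin (n i),
              if k < j then
                ι R (piCoords γ (Finsupp.single (Ed i k) (γ i (Ed i k)))) *
                ι R (piCoords γ (Finsupp.single (Ed i j) (γ i (Ed i j))))
              else 0)
            - (4:ℤ) • (ι R (piCoords γ (γ i)) * ι R (piCoords γ (δ i)))))
        = ∑ i : Fin g, ∑ a : Fin g, ∑ b : Fin g, Φ i a b • Wdg g R i a b := by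
          refine Finset.sum_congr rfl fun i _ => ?_
          exact theta_term_expand i
            (fun p => piCoords γ (Finsupp.single (Ed i p) (γ i (Ed i p))))
            (piCoords γ (γ i)) (piCoords γ (δ i))
      _ = ∑ i : Fin g, ∑ j : Fin g, ∑ k : Fin g,
            if i < j ∧ j < k then
              (Φ i j k - Φ i k j - Φ j i k + Φ j k i + Φ k i j - Φ k j i) • Wdg g R i j k
            else 0 := sort3 Φ
      _ = _ := by
          refine Finset.sum_congr rfl fun i _ => Finset.sum_congr rfl fun j _ =>
            Finset.sum_congr rfl fun k _ => ?_
          by_cases h : i < j ∧ j < k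
          · simp only [if_pos h]
            rfl
          · simp only [if_neg h]
  · intro i j k t
    have hzero : ∀ s u : Fin g, s ≠ u → γ s (e u) = 0 := by
      intro s u hsu
      by_contra hne
      have hmem : e u ∈ (γ s).support := Finsupp.mem_support_iff.2 hne
      rcases hγs s hmem with h | h
      · exact heT u h
      · exact hsu (he (Set.mem_singleton_iff.1 h)).symm
    have hQnovar : ∀ u a : Fin g, a ≠ u → e t ∉ (piCoords γ (γ u) a).vars := by
      intro u a hau
      apply novar_lengthPairing
      by_cases htu : t = u
      · subst htu; rw [hzero a t hau, mul_zero]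
      · rw [hzero u t (Ne.symm htu), zero_mul]
    have hDnovar : ∀ u a : Fin g, e t ∉ (piCoords γ (δ u) a).vars := by
      intro u a
      apply novar_lengthPairing
      have h0 : δ u (e t) = 0 := by
        by_contra hne
        exact heT t (hδ u (Finsupp.mem_support_iff.2 hne))
      rw [h0, zero_mul]
    have hPnovar : ∀ (u : Fin g) (p : Fin (n u)) (a : Fin g), a ≠ u →
        e t ∉ (piCoords γ (Finsupp.single (Ed u p) (γ u (Ed u p))) a).vars := by
      intro u p a hau
      apply novar_lengthPairing
      by_cases hE : Ed u p = e t
      · have hmem : Ed u p ∈ (γ u).support := by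
          rw [hEdsupp u]; exact Finset.mem_image.2 ⟨p, Finset.mem_univ p, rfl⟩
        have htu : t = u := by
          rcases hγs u (show e t ∈ ((γ u).support : Set E) by rw [← hE]; exact hmem)
            with hh | hh
          · exact absurd hh (heT t)
          · exact he (Set.mem_singleton_iff.1 hh)
        subst htu
        rw [hzero a t hau, mul_zero]
      · rw [Finsupp.single_eq_of_ne' hE, zero_mul]
    have hS : ∀ u a b : Fin g, a ≠ u → b ≠ u → e t ∉ (Φ u a b).vars := by
      intro u a b hau hbu
      simp only [hΦdef]
      apply novar_sub
      · apply novar_two_mul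
        apply novar_sum
        intro p _
        apply novar_sum
        intro q _
        by_cases hpq : p < q
        · rw [if_pos hpq]
          exact novar_mul (hPnovar u p a hau) (hPnovar u q b hbu)
        · rw [if_neg hpq]
          simp
      · exact novar_four_mul (novar_mul (hQnovar u a hau) (hDnovar u b))
    by_cases h : i < j ∧ j < k
    · simp only [if_pos h]
      have hij : i ≠ j := ne_of_lt h.1
      have hjk : j ≠ k := ne_of_lt h.2
      have hik : i ≠ k := ne_of_lt (h.1.trans h.2)
      exact novar_sub (novar_add (novar_add (novar_sub (novar_sub
        (hS i j k hij.symm hik.symm) (hS i k j hik.symm hij.symm))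
        (hS j i k hij hjk.symm)) (hS j k i hjk.symm hij))
        (hS k i j hik hjk)) (hS k j i hjk hik)
    · simp only [if_neg h]
      simp
end

section
/- In the setting of (1,q)-chains on a quotient N_R/Λ with simplices modulo Λ-translation: for any n ∈ N and u, u' ∈ N_R, the identity −(u',u) − (−u',−u) = (u,u') + (−u,−u') − ∂((u,u',u) + (u,u,u)) − ∂((−u,−u',−u) + (−u,−u,−u)) holds in the chain group C_{1,1}. In particular, reversing the orientation of a (1,1)-simplex pair changes it only by the boundary of a degenerate (1,2)-chain. -/
/-!
Reversing the orientation of a `(1,1)`-simplex pair changes it only by the boundary of a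
degenerate `(1,2)`-chain: in `C_{1,1}`,
`n ⊗ (−(u',u) − (−u',−u)) = n ⊗ ((u,u') + (−u,−u')) − ∂(n ⊗ ((u,u',u) + (u,u,u))) − ∂(n ⊗ ((−u,−u',−u) + (−u,−u,−u)))`.
-/

def simRel {M : Type} [AddCommGroup M] (Λ : AddSubgroup M) (q : ℕ) (x y : Fin q → M) : Prop :=
  ∃ l ∈ Λ, y = fun i => x i + l

def TSimplex {M : Type} [AddCommGroup M] (Λ : AddSubgroup M) (q : ℕ) :=
  Quot (simRel Λ q)

def TChain {M : Type} [AddCommGroup M] (Λ : AddSubgroup M) (q : ℕ) :=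
  FreeAbelianGroup (TSimplex Λ q)

noncomputable instance {M : Type} [AddCommGroup M] (Λ : AddSubgroup M) (q : ℕ) :
    AddCommGroup (TChain Λ q) :=
  inferInstanceAs (AddCommGroup (FreeAbelianGroup _))

def tface {M : Type} [AddCommGroup M] (Λ : AddSubgroup M) {q : ℕ} (i : Fin (q + 1)) :
    TSimplex Λ (q + 1) → TSimplex Λ q :=
  Quot.map (fun x => x ∘ i.succAbove) (by
    rintro x y ⟨l, hl, rfl⟩
    exact ⟨l, hl, rfl⟩)

noncomputable def tboundary {M : Type} [AddCommGroup M] (Λ : AddSubgroup M) (q : ℕ) :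
    TChain Λ (q + 1) →+ TChain Λ q :=
  FreeAbelianGroup.lift fun s =>
    ∑ i : Fin (q + 1), ((-1) ^ (i : ℕ) : ℤ) •
      (FreeAbelianGroup.of (tface Λ i s) : TChain Λ q)

/-- A `(1,1)`-type simplex `(a,b)` as a chain. -/
def seg {M : Type} [AddCommGroup M] (Λ : AddSubgroup M) (a b : M) : TChain Λ 2 :=
  FreeAbelianGroup.of (Quot.mk _ ![a, b])

/-- A `(1,2)`-type simplex `(a,b,c)` as a chain. -/
def tri {M : Type} [AddCommGroup M] (Λ : AddSubgroup M) (a b c : M) : TChain Λ 3 :=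
  FreeAbelianGroup.of (Quot.mk _ ![a, b, c])


open scoped TensorProduct

lemma tboundary_tri {M : Type} [AddCommGroup M] (Λ : AddSubgroup M) (a b c : M) :
    tboundary Λ 2 (tri Λ a b c) = seg Λ b c - seg Λ a c + seg Λ a b := by
  have h0 : (![a, b, c] ∘ (0 : Fin 3).succAbove) = ![b, c] := by
    ext i; fin_cases i <;> rfl
  have h1 : (![a, b, c] ∘ (1 : Fin 3).succAbove) = ![a, c] := by
    ext i; fin_cases i <;> rfl
  have h2 : (![a, b, c] ∘ (2 : Fin 3).succAbove) = ![a, b] := by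
    ext i; fin_cases i <;> rfl
  show (FreeAbelianGroup.lift _ : TChain Λ 3 →+ TChain Λ 2) (FreeAbelianGroup.of _) = _
  erw [FreeAbelianGroup.lift_apply_of]
  erw [Fin.sum_univ_three]
  simp only [tface, Quot.map, seg]
  rw [h0, h1, h2]
  simp [sub_eq_add_neg]
  rfl

theorem reverse_segment_up_to_degenerate_boundary
    {N M : Type} [AddCommGroup N] [AddCommGroup M] (Λ : AddSubgroup M)
    (n : N) (u u' : M) :
    n ⊗ₜ[ℤ] (-(seg Λ u' u) - seg Λ (-u') (-u)) =
      n ⊗ₜ[ℤ] (seg Λ u u' + seg Λ (-u) (-u'))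
        - (LinearMap.lTensor N (tboundary Λ 2).toIntLinearMap)
            (n ⊗ₜ[ℤ] (tri Λ u u' u + tri Λ u u u))
        - (LinearMap.lTensor N (tboundary Λ 2).toIntLinearMap)
            (n ⊗ₜ[ℤ] (tri Λ (-u) (-u') (-u) + tri Λ (-u) (-u) (-u))) := by
  have key : ∀ v v' : M,
      tboundary Λ 2 (tri Λ v v' v + tri Λ v v v) = seg Λ v' v + seg Λ v v' := by
    intro v v'
    rw [map_add, tboundary_tri, tboundary_tri]
    abel
  rw [LinearMap.lTensor_tmul, LinearMap.lTensor_tmul,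
    AddMonoidHom.coe_toIntLinearMap, key, key]
  rw [← TensorProduct.tmul_sub, ← TensorProduct.tmul_sub]
  congr 1
  abel
end

section
/- (Nontriviality of the Ceresa period of K₄.) Let P ⊂ ℤ[x₁,…,x₆] be the subgroup generated by the six polynomials 2(x₁x₄ − x₃x₆), 2(x₂x₅ − x₃x₆), 2(x₁x₂ + x₂x₅ + x₁x₆ + x₂x₆), 2(x₁x₃ + x₁x₅ + x₃x₅ + x₃x₆), 2(x₂x₃ + x₂x₄ + x₃x₄ + x₃x₆), and 2(x₄x₅ + x₃x₆ + x₄x₆ + x₅x₆). Then 2(x₄x₅ + x₄x₆ + x₅x₆) ∉ P. -/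
/-!
Nontriviality of the Ceresa period of `K₄`: the element `2(x₄x₅ + x₄x₆ + x₅x₆)` is not in the
subgroup of `ℤ[x₁,…,x₆]` generated by the six listed quadratic polynomials.
(Here variables are indexed by `Fin 6`, with `X i` corresponding to `x_{i+1}`.)
-/

open MvPolynomial

noncomputable def x (i : Fin 6) : MvPolynomial (Fin 6) ℤ := MvPolynomial.X i

/-- An auxiliary additive functional: an integer combination of evaluations at points,
which vanishes on all six generators but not on the target element. -/
noncomputable def Fhom : MvPolynomial (Fin 6) ℤ →+ ℤ :=
  (eval ![1,0,0,1,0,0]).toAddMonoidHom + (eval ![0,1,0,0,1,0]).toAddMonoidHom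
  - (eval ![1,1,0,0,0,0]).toAddMonoidHom - (eval ![1,0,1,0,0,0]).toAddMonoidHom
  - (eval ![0,1,1,0,0,0]).toAddMonoidHom - (eval ![0,0,0,1,1,0]).toAddMonoidHom
  + (eval ![0,0,1,0,0,1]).toAddMonoidHom + (eval ![1,0,0,0,0,0]).toAddMonoidHom
  + (eval ![0,1,0,0,0,0]).toAddMonoidHom + (eval ![0,0,1,0,0,0]).toAddMonoidHom
  - (eval ![0,0,0,0,0,1]).toAddMonoidHom - (eval ![0,0,0,0,0,0]).toAddMonoidHom

theorem k4_period_nontrivial :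
    (2 * (x 3 * x 4 + x 3 * x 5 + x 4 * x 5)) ∉
      AddSubgroup.closure
        ({ 2 * (x 0 * x 3 - x 2 * x 5),
           2 * (x 1 * x 4 - x 2 * x 5),
           2 * (x 0 * x 1 + x 1 * x 4 + x 0 * x 5 + x 1 * x 5),
           2 * (x 0 * x 2 + x 0 * x 4 + x 2 * x 4 + x 2 * x 5),
           2 * (x 1 * x 2 + x 1 * x 3 + x 2 * x 3 + x 2 * x 5),
           2 * (x 3 * x 4 + x 2 * x 5 + x 3 * x 5 + x 4 * x 5) } :
          Set (MvPolynomial (Fin 6) ℤ)) := by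
  intro hmem
  have hle : AddSubgroup.closure
        ({ 2 * (x 0 * x 3 - x 2 * x 5),
           2 * (x 1 * x 4 - x 2 * x 5),
           2 * (x 0 * x 1 + x 1 * x 4 + x 0 * x 5 + x 1 * x 5),
           2 * (x 0 * x 2 + x 0 * x 4 + x 2 * x 4 + x 2 * x 5),
           2 * (x 1 * x 2 + x 1 * x 3 + x 2 * x 3 + x 2 * x 5),
           2 * (x 3 * x 4 + x 2 * x 5 + x 3 * x 5 + x 4 * x 5) } :
          Set (MvPolynomial (Fin 6) ℤ)) ≤ Fhom.ker := by
    rw [AddSubgroup.closure_le]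
    intro p hp
    simp only [Set.mem_insert_iff, Set.mem_singleton_iff] at hp
    rcases hp with h | h | h | h | h | h <;> subst h <;>
      · show Fhom _ = 0
        simp [Fhom, x]
  have h0 : Fhom (2 * (x 3 * x 4 + x 3 * x 5 + x 4 * x 5)) = 0 := hle hmem
  have h2 : Fhom (2 * (x 3 * x 4 + x 3 * x 5 + x 4 * x 5)) = -2 := by
    simp [Fhom, x]
  omega
end

section
/- (Nontriviality of the Ceresa period of L₃ with unit edge lengths.) In the free abelian group Λ³ℤ⁴ with standard basis ε₁,ε₂,ε₃,ε₄, let P be the subgroup generated by 2ε₂∧ε₃∧ε₄ + 2ε₁∧ε₂∧ε₄ + 2ε₁∧ε₂∧ε₃, 2ε₁∧ε₃∧ε₄ + 2ε₁∧ε₂∧ε₄ + 2ε₁∧ε₂∧ε₃, 4ε₁∧ε₂∧ε₄, and 4ε₁∧ε₂∧ε₃. Then 2ε₁∧ε₂∧ε₄ + 2ε₁∧ε₂∧ε₃ ∉ P. -/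
/-!
Nontriviality of the Ceresa period of `L₃` with unit edge lengths: in `Λ³ℤ⁴`,
`2ε₁∧ε₂∧ε₄ + 2ε₁∧ε₂∧ε₃` is not in the subgroup generated by the four listed elements.
(Indices `ε₁,ε₂,ε₃,ε₄` correspond to `0,1,2,3 : Fin 4`.)
-/

open ExteriorAlgebra

noncomputable def w (i j k : Fin 4) : ExteriorAlgebra ℤ (Fin 4 → ℤ) :=
  ι ℤ (Pi.single i 1) * ι ℤ (Pi.single j 1) * ι ℤ (Pi.single k 1)

/-- Degree-3 alternating form, the determinant with first row fixed to `![1,-1,1,0]`. -/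
noncomputable def Faux : (Fin 4 → ℤ) [⋀^Fin 3]→ₗ[ℤ] ℤ :=
  (Matrix.detRowAlternating : (Fin 4 → ℤ) [⋀^Fin 4]→ₗ[ℤ] ℤ).curryLeft ![1,-1,1,0]

noncomputable def famAux : ∀ i : ℕ, (Fin 4 → ℤ) [⋀^Fin i]→ₗ[ℤ] ℤ :=
  fun i => if h : i = 3 then h ▸ Faux else 0

noncomputable def φAux : ExteriorAlgebra ℤ (Fin 4 → ℤ) →ₗ[ℤ] ℤ := liftAlternating famAux

lemma w_eq_iMulti (i j k : Fin 4) :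
    w i j k = ιMulti ℤ 3 ![Pi.single i 1, Pi.single j 1, Pi.single k 1] := by
  simp [w, ιMulti_apply, List.ofFn_succ, mul_assoc]

lemma φAux_w (i j k : Fin 4) :
    φAux (w i j k)
      = Matrix.det (Matrix.of ![![1,-1,1,0], Pi.single i 1, Pi.single j 1, Pi.single k 1]) := by
  rw [w_eq_iMulti, φAux, liftAlternating_apply_ιMulti]
  simp [famAux, Faux, AlternatingMap.curryLeft_apply_apply, Matrix.detRowAlternating]
  congr 1

lemma φAux_123 : φAux (w 1 2 3) = 1 := by
  rw [φAux_w]; simp [Matrix.det_succ_row_zero, Fin.sum_univ_succ, Pi.single_apply]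

lemma φAux_023 : φAux (w 0 2 3) = 1 := by
  rw [φAux_w]; simp [Matrix.det_succ_row_zero, Fin.sum_univ_succ, Pi.single_apply]; decide

lemma φAux_013 : φAux (w 0 1 3) = 1 := by
  rw [φAux_w]; simp [Matrix.det_succ_row_zero, Fin.sum_univ_succ, Pi.single_apply]; decide

lemma φAux_012 : φAux (w 0 1 2) = 0 := by
  rw [φAux_w]; simp [Matrix.det_succ_row_zero, Fin.sum_univ_succ, Pi.single_apply]

noncomputable def ψAux : ExteriorAlgebra ℤ (Fin 4 → ℤ) →+ ZMod 4 :=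
  (Int.castAddHom (ZMod 4)).comp φAux.toAddMonoidHom

lemma ψAux_apply (x : ExteriorAlgebra ℤ (Fin 4 → ℤ)) : ψAux x = ((φAux x : ℤ) : ZMod 4) := rfl

theorem l3_period_nontrivial :
    (2:ℤ) • w 0 1 3 + (2:ℤ) • w 0 1 2 ∉
      AddSubgroup.closure
        ({ (2:ℤ) • w 1 2 3 + (2:ℤ) • w 0 1 3 + (2:ℤ) • w 0 1 2,
           (2:ℤ) • w 0 2 3 + (2:ℤ) • w 0 1 3 + (2:ℤ) • w 0 1 2,
           (4:ℤ) • w 0 1 3,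
           (4:ℤ) • w 0 1 2 } : Set (ExteriorAlgebra ℤ (Fin 4 → ℤ))) := by
  intro hmem
  have hzero : ∀ y ∈ AddSubgroup.closure
        ({ (2:ℤ) • w 1 2 3 + (2:ℤ) • w 0 1 3 + (2:ℤ) • w 0 1 2,
           (2:ℤ) • w 0 2 3 + (2:ℤ) • w 0 1 3 + (2:ℤ) • w 0 1 2,
           (4:ℤ) • w 0 1 3,
           (4:ℤ) • w 0 1 2 } : Set (ExteriorAlgebra ℤ (Fin 4 → ℤ))), ψAux y = 0 := by
    intro y hy
    induction hy using AddSubgroup.closure_induction with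
    | mem z hz =>
      rcases hz with h | h | h | h <;> subst h <;>
        simp only [ψAux_apply, map_add, LinearMap.map_smul, φAux_123, φAux_023, φAux_013,
          φAux_012, smul_eq_mul, mul_one, mul_zero, add_zero] <;> decide
    | zero => simp
    | add a b _ _ ha hb => simp [map_add, ha, hb]
    | neg a _ ha => simp [map_neg, ha]
  have h2 : ψAux ((2:ℤ) • w 0 1 3 + (2:ℤ) • w 0 1 2) = 2 := by
    simp only [ψAux_apply, map_add, LinearMap.map_smul, φAux_013, φAux_012, smul_eq_mul,
      mul_one, mul_zero, add_zero]
    decide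
  have := hzero _ hmem
  rw [h2] at this
  exact (by decide : (2 : ZMod 4) ≠ 0) this
end

section
/- (Edge pairs in ladders fail the Ceresa condition.) Let T be a finite tree of maximal valence 3 and L(T) the ladder over T, consisting of T, a disjoint copy ι(T), and for each vertex v of T, 3 − val(v) parallel vertical edges between v and ι(v). Fix a 1-valent vertex v₀ of T and a vertical edge e₀ at v₀, and take the spanning tree S with edges E(T) ∪ E(ι(T)) ∪ {e₀}; the fundamental cycles are indexed by the remaining vertical edges. Then no pair of distinct edges e, e' of L(T) satisfies condition (*): e and e' share some fundamental cycle, and each is part of another fundamental cycle that the other is not in. -/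
set_option linter.unusedSectionVars false


section Ladder

variable {V ET : Type} [Fintype V] [Fintype ET] [DecidableEq V] [DecidableEq ET]

/-- The valence of a vertex `v` in the tree `T` (loops would count twice). -/
def degT (srcT tgtT : ET → V) (v : V) : ℕ :=
  (Finset.univ.filter fun e => srcT e = v).card + (Finset.univ.filter fun e => tgtT e = v).card

/-- The edge set of the ladder `L(T)`: two copies of `E(T)` together with `3 − val(v)`
parallel vertical edges between `v` and `ι(v)` for each vertex `v` of `T`. -/
def LadderE (srcT tgtT : ET → V) : Type :=
  (ET ⊕ ET) ⊕ (Σ v : V, Fin (3 - degT srcT tgtT v))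

instance (srcT tgtT : ET → V) : Fintype (LadderE srcT tgtT) :=
  inferInstanceAs (Fintype ((ET ⊕ ET) ⊕ (Σ v : V, Fin (3 - degT srcT tgtT v))))

instance (srcT tgtT : ET → V) : DecidableEq (LadderE srcT tgtT) :=
  inferInstanceAs (DecidableEq ((ET ⊕ ET) ⊕ (Σ v : V, Fin (3 - degT srcT tgtT v))))

/-- Sources of edges of `L(T)`; vertices are `V × Bool` (the two copies of `V(T)`). -/
def ladderSrc (srcT tgtT : ET → V) : LadderE srcT tgtT → V × Bool
  | Sum.inl (Sum.inl e) => (srcT e, false)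
  | Sum.inl (Sum.inr e) => (srcT e, true)
  | Sum.inr ⟨v, _⟩ => (v, false)

/-- Targets of edges of `L(T)`. -/
def ladderTgt (srcT tgtT : ET → V) : LadderE srcT tgtT → V × Bool
  | Sum.inl (Sum.inl e) => (tgtT e, false)
  | Sum.inl (Sum.inr e) => (tgtT e, true)
  | Sum.inr ⟨v, _⟩ => (v, true)

namespace CeresaAux

/-- Reachability using only edges satisfying `P`. -/
def MR (srcT tgtT : ET → V) (P : ET → Prop) : V → V → Prop :=
  Relation.ReflTransGen
    (fun a b => ∃ f, P f ∧ ((srcT f = a ∧ tgtT f = b) ∨ (srcT f = b ∧ tgtT f = a)))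

variable {srcT tgtT : ET → V}

theorem mr_symm {P : ET → Prop} {u v : V} (h : MR srcT tgtT P u v) :
    MR srcT tgtT P v u := by
  refine (@Relation.ReflTransGen.stdSymm _ _ ⟨?_⟩).symm _ _ h
  rintro a b ⟨f, hf, h | h⟩
  exacts [⟨f, hf, Or.inr h⟩, ⟨f, hf, Or.inl h⟩]

theorem mr_mono {P Q : ET → Prop} (hPQ : ∀ f, P f → Q f) {u v : V}
    (h : MR srcT tgtT P u v) : MR srcT tgtT Q u v := by
  refine Relation.ReflTransGen.mono ?_ _ _ h
  rintro a b ⟨f, hf, hor⟩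
  exact ⟨f, hPQ f hf, hor⟩

theorem mr_split {P : ET → Prop} (e : ET) {u v : V} (h : MR srcT tgtT P u v) :
    MR srcT tgtT (fun f => P f ∧ f ≠ e) u v ∨
      (MR srcT tgtT (fun f => P f ∧ f ≠ e) u (srcT e) ∧
        MR srcT tgtT (fun f => P f ∧ f ≠ e) (tgtT e) v) ∨
      (MR srcT tgtT (fun f => P f ∧ f ≠ e) u (tgtT e) ∧
        MR srcT tgtT (fun f => P f ∧ f ≠ e) (srcT e) v) := by
  induction h with
  | refl => exact Or.inl Relation.ReflTransGen.refl
  | tail hab hbc ih =>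
    rename_i b c
    obtain ⟨f, hf, hor⟩ := hbc
    by_cases hfe : f = e
    · subst hfe
      rcases hor with ⟨hs, ht⟩ | ⟨hs, ht⟩
      · rcases ih with ih | ⟨ih1, ih2⟩ | ⟨ih1, ih2⟩
        · exact Or.inr (Or.inl ⟨hs ▸ ih, ht ▸ Relation.ReflTransGen.refl⟩)
        · exact Or.inr (Or.inl ⟨ih1, ht ▸ Relation.ReflTransGen.refl⟩)
        · exact Or.inl (ht ▸ ih1)
      · rcases ih with ih | ⟨ih1, ih2⟩ | ⟨ih1, ih2⟩
        · exact Or.inr (Or.inr ⟨ht ▸ ih, hs ▸ Relation.ReflTransGen.refl⟩)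
        · exact Or.inl (hs ▸ ih1)
        · exact Or.inr (Or.inr ⟨ih1, hs ▸ Relation.ReflTransGen.refl⟩)
    · have step : MR srcT tgtT (fun f => P f ∧ f ≠ e) b c :=
        Relation.ReflTransGen.single ⟨f, ⟨hf, hfe⟩, hor⟩
      rcases ih with ih | ⟨ih1, ih2⟩ | ⟨ih1, ih2⟩
      · exact Or.inl (ih.trans step)
      · exact Or.inr (Or.inl ⟨ih1, ih2.trans step⟩)
      · exact Or.inr (Or.inr ⟨ih1, ih2.trans step⟩)

theorem mr_split_pair {P : ET → Prop} (e : ET) {u v : V} (h : MR srcT tgtT P u v) :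
    MR srcT tgtT (fun f => P f ∧ f ≠ e) u v ∨
      ∃ p q : V, ((p = srcT e ∧ q = tgtT e) ∨ (p = tgtT e ∧ q = srcT e)) ∧
        MR srcT tgtT (fun f => P f ∧ f ≠ e) u p ∧
        MR srcT tgtT (fun f => P f ∧ f ≠ e) q v := by
  rcases mr_split e h with h | ⟨h1, h2⟩ | ⟨h1, h2⟩
  · exact Or.inl h
  · exact Or.inr ⟨_, _, Or.inl ⟨rfl, rfl⟩, h1, h2⟩
  · exact Or.inr ⟨_, _, Or.inr ⟨rfl, rfl⟩, h1, h2⟩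

def mrSetoid (srcT tgtT : ET → V) (S : Finset ET) : Setoid V where
  r := MR srcT tgtT (· ∈ S)
  iseqv := by
    constructor
    · intro x; exact Relation.ReflTransGen.refl
    · intro x y h; exact mr_symm h
    · intro x y z h h'; exact h.trans h'

theorem card_le_quot (S : Finset ET) :
    Fintype.card V ≤ S.card + Nat.card (Quotient (mrSetoid srcT tgtT S)) := by
  classical
  induction S using Finset.induction_on with
  | empty =>
    have hbij : Function.Bijective (Quotient.mk (mrSetoid srcT tgtT (∅ : Finset ET))) := by
      constructor
      · intro x y hxy
        have h : MR srcT tgtT (· ∈ (∅ : Finset ET)) x y := Quotient.exact hxy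
        clear hxy
        induction h with
        | refl => rfl
        | tail _ hbc ih =>
          obtain ⟨f, hf, _⟩ := hbc
          simp at hf
      · exact Quotient.mk''_surjective
    rw [← Nat.card_eq_of_bijective _ hbij, Nat.card_eq_fintype_card]
    simp
  | @insert e S he ih =>
    rw [Finset.card_insert_of_notMem he]
    have key : Nat.card (Quotient (mrSetoid srcT tgtT S)) ≤
        1 + Nat.card (Quotient (mrSetoid srcT tgtT (insert e S))) := by
      set QS := Quotient (mrSetoid srcT tgtT S)
      set QS' := Quotient (mrSetoid srcT tgtT (insert e S))
      have hcong : ∀ a b : V, MR srcT tgtT (· ∈ S) a b →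
          MR srcT tgtT (· ∈ insert e S) a b := fun a b h =>
        mr_mono (fun f hf => Finset.mem_insert_of_mem hf) h
      let g : QS → QS' := Quotient.map id (fun a b h => hcong a b h)
      have hgmk : ∀ a : V, g (Quotient.mk _ a) = Quotient.mk _ a := fun a => rfl
      set p : QS := Quotient.mk _ (srcT e) with hp
      have hg : ∀ x y : QS, g x = g y → x = y ∨ x = p ∨ y = p := by
        rintro ⟨a⟩ ⟨b⟩ hxy
        have hab : MR srcT tgtT (· ∈ insert e S) a b := Quotient.exact hxy
        rcases mr_split e hab with h | ⟨h1, h2⟩ | ⟨h1, h2⟩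
        · exact Or.inl (Quotient.sound (mr_mono
            (fun f hf => (Finset.mem_insert.1 hf.1).resolve_left hf.2) h))
        · exact Or.inr (Or.inl (Quotient.sound (mr_mono
            (fun f hf => (Finset.mem_insert.1 hf.1).resolve_left hf.2) h1)))
        · exact Or.inr (Or.inr (Quotient.sound ((mr_symm (mr_mono
            (fun f hf => (Finset.mem_insert.1 hf.1).resolve_left hf.2) h2)))))
      have hinj : Function.Injective (fun x : {x : QS // x ≠ p} => g x.1) := by
        rintro ⟨x, hx⟩ ⟨y, hy⟩ hxy
        simp only [Subtype.mk.injEq]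
        rcases hg x y hxy with h | h | h
        · exact h
        · exact absurd h hx
        · exact absurd h hy
      have h1 : Nat.card {x : QS // x ≠ p} ≤ Nat.card QS' :=
        Nat.card_le_card_of_injective _ hinj
      letI : Fintype QS := Fintype.ofFinite _
      haveI : Nonempty QS := ⟨p⟩
      have h2 : Nat.card QS = Nat.card {x : QS // x ≠ p} + 1 := by
        rw [Nat.card_eq_fintype_card, Nat.card_eq_fintype_card]
        have := Fintype.card_subtype_compl (fun x : QS => x = p)
        rw [Fintype.card_subtype_eq] at this
        simp only [ne_eq]
        have hpos : 1 ≤ Fintype.card QS := Fintype.card_pos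
        omega
      omega
    omega

section Conn

variable (hconn : ∀ v w : V, Relation.ReflTransGen
      (fun a b => ∃ f : ET, (srcT f = a ∧ tgtT f = b) ∨ (srcT f = b ∧ tgtT f = a)) v w)
include hconn

theorem mr_full (v w : V) : MR srcT tgtT (fun _ => True) v w := by
  refine Relation.ReflTransGen.mono ?_ _ _ (hconn v w)
  rintro a b ⟨f, h⟩
  exact ⟨f, trivial, h⟩

theorem mr_cover (e : ET) (x : V) :
    MR srcT tgtT (· ≠ e) (tgtT e) x ∨ MR srcT tgtT (· ≠ e) (srcT e) x := by
  have h := mr_split e (mr_full hconn (tgtT e) x)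
  have m : ∀ {a b : V}, MR srcT tgtT (fun f => True ∧ f ≠ e) a b →
      MR srcT tgtT (· ≠ e) a b := fun h => mr_mono (fun f hf => hf.2) h
  rcases h with h | ⟨h1, h2⟩ | ⟨h1, h2⟩
  · exact Or.inl (m h)
  · exact Or.inl (m h2)
  · exact Or.inr (m h2)

theorem sep_iff (e : ET) (u w : V) :
    ((MR srcT tgtT (· ≠ e) (tgtT e) w ↔ MR srcT tgtT (· ≠ e) (tgtT e) u)) ↔
      MR srcT tgtT (· ≠ e) u w := by
  constructor
  · intro h
    by_cases hw : MR srcT tgtT (· ≠ e) (tgtT e) w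
    · exact (mr_symm (h.1 hw)).trans hw
    · have hu : ¬ MR srcT tgtT (· ≠ e) (tgtT e) u := fun hu => hw (h.2 hu)
      rcases mr_cover hconn e w with h' | h'
      · exact absurd h' hw
      · rcases mr_cover hconn e u with h'' | h''
        · exact absurd h'' hu
        · exact (mr_symm h'').trans h'
  · intro h
    constructor
    · intro h'; exact h'.trans (mr_symm h)
    · intro h'; exact h'.trans h

theorem mr_offside (e : ET) {v₀ p q : V} (hp : ¬ MR srcT tgtT (· ≠ e) v₀ p)
    (hq : ¬ MR srcT tgtT (· ≠ e) v₀ q) : MR srcT tgtT (· ≠ e) p q := by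
  rw [← sep_iff hconn e v₀ p] at hp
  rw [← sep_iff hconn e v₀ q] at hq
  rw [← sep_iff hconn e p q]
  by_cases h1 : MR srcT tgtT (· ≠ e) (tgtT e) p <;>
    by_cases h2 : MR srcT tgtT (· ≠ e) (tgtT e) q <;>
      by_cases h3 : MR srcT tgtT (· ≠ e) (tgtT e) v₀ <;> tauto

/-- Laminarity of the separation sets. -/
theorem laminar (v₀ : V) {t t' : ET} {x a b : V}
    (hx1 : ¬ MR srcT tgtT (· ≠ t) v₀ x) (hx2 : ¬ MR srcT tgtT (· ≠ t') v₀ x)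
    (ha1 : ¬ MR srcT tgtT (· ≠ t) v₀ a) (ha2 : MR srcT tgtT (· ≠ t') v₀ a)
    (hb1 : MR srcT tgtT (· ≠ t) v₀ b) (hb2 : ¬ MR srcT tgtT (· ≠ t') v₀ b) :
    False := by
  have m1 : ∀ {p q : V}, MR srcT tgtT (fun f => f ≠ t ∧ f ≠ t') p q →
      MR srcT tgtT (· ≠ t) p q := fun h => mr_mono (fun f hf => hf.1) h
  have m2 : ∀ {p q : V}, MR srcT tgtT (fun f => f ≠ t ∧ f ≠ t') p q →
      MR srcT tgtT (· ≠ t') p q := fun h => mr_mono (fun f hf => hf.2) h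
  have m1' : ∀ {p q : V}, MR srcT tgtT (fun f => f ≠ t' ∧ f ≠ t) p q →
      MR srcT tgtT (· ≠ t) p q := fun h => mr_mono (fun f hf => hf.2) h
  have m2' : ∀ {p q : V}, MR srcT tgtT (fun f => f ≠ t' ∧ f ≠ t) p q →
      MR srcT tgtT (· ≠ t') p q := fun h => mr_mono (fun f hf => hf.1) h
  have hax : MR srcT tgtT (· ≠ t) a x := mr_offside hconn t ha1 hx1
  rcases mr_split_pair t' hax with h | ⟨p', q', hpq', h1, h2⟩
  · exact hx2 (ha2.trans (m2 h))
  have hvp' : MR srcT tgtT (· ≠ t') v₀ p' := ha2.trans (m2 h1)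
  have hq'x : ¬ MR srcT tgtT (· ≠ t') v₀ q' := fun hc => hx2 (hc.trans (m2 h2))
  have hbx : MR srcT tgtT (· ≠ t') b x := mr_offside hconn t' hb2 hx2
  rcases mr_split_pair t hbx with h' | ⟨p, q, hpq, h1', h2'⟩
  · exact hx1 (hb1.trans (m1' h'))
  have hpt : MR srcT tgtT (· ≠ t) v₀ p := hb1.trans (m1' h1')
  rcases mr_split_pair t' hpt with h'' | ⟨r, s, hrs, h1'', h2''⟩
  · exact hb2 ((m2 h'').trans (mr_symm (m2' h1')))
  have hvr : MR srcT tgtT (· ≠ t') v₀ r := m2 h1''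
  have hrp' : s = q' ∧ MR srcT tgtT (fun f => f ≠ t ∧ f ≠ t') s p := by
    rcases hrs with ⟨hr, hs⟩ | ⟨hr, hs⟩ <;> rcases hpq' with ⟨hp', hq'⟩ | ⟨hp', hq'⟩
    · exact ⟨hs.trans hq'.symm, h2''⟩
    · exact absurd ((hr.trans hq'.symm) ▸ hvr) hq'x
    · exact absurd ((hr.trans hq'.symm) ▸ hvr) hq'x
    · exact ⟨hs.trans hq'.symm, h2''⟩
  have cbx : MR srcT tgtT (· ≠ t) b x :=
    ((m1' h1').trans (mr_symm (m1 (hrp'.1 ▸ hrp'.2)))).trans (m1 h2)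
  exact hx1 (hb1.trans cbx)

theorem conn_card (v₁ : V) (S : Finset ET)
    (hcov : ∀ w, MR srcT tgtT (· ∈ S) v₁ w) : Fintype.card V ≤ S.card + 1 := by
  have h := card_le_quot (srcT := srcT) (tgtT := tgtT) S
  have hsub : Subsingleton (Quotient (mrSetoid srcT tgtT S)) := by
    constructor
    rintro ⟨a⟩ ⟨b⟩
    exact Quotient.sound ((mr_symm (hcov a)).trans (hcov b))
  letI : Fintype (Quotient (mrSetoid srcT tgtT S)) := Fintype.ofFinite _
  have : Nat.card (Quotient (mrSetoid srcT tgtT S)) ≤ 1 := by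
    rw [Nat.card_eq_fintype_card]
    exact Fintype.card_le_one_iff_subsingleton.2 hsub
  omega

/-- Every edge of the tree is a bridge. -/
theorem bridge (hcard : Fintype.card ET + 1 = Fintype.card V) (e : ET) :
    ¬ MR srcT tgtT (· ≠ e) (tgtT e) (srcT e) := by
  intro h
  classical
  have m : ∀ {a b : V}, MR srcT tgtT (fun f => True ∧ f ≠ e) a b →
      MR srcT tgtT (· ∈ Finset.univ.erase e) a b :=
    fun h => mr_mono (fun f hf => Finset.mem_erase.2 ⟨hf.2, Finset.mem_univ f⟩) h
  have m' : ∀ {a b : V}, MR srcT tgtT (· ≠ e) a b →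
      MR srcT tgtT (· ∈ Finset.univ.erase e) a b :=
    fun h => mr_mono (fun f hf => Finset.mem_erase.2 ⟨hf, Finset.mem_univ f⟩) h
  have cov : ∀ w, MR srcT tgtT (· ∈ Finset.univ.erase e) (srcT e) w := by
    intro w
    rcases mr_split e (mr_full hconn (srcT e) w) with h' | ⟨h1, h2⟩ | ⟨h1, h2⟩
    · exact m h'
    · exact (m' (mr_symm h)).trans (m h2)
    · exact m h2
  have hle := conn_card hconn (srcT e) (Finset.univ.erase e) cov
  rw [Finset.card_erase_of_mem (Finset.mem_univ e), Finset.card_univ] at hle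
  have : 1 ≤ Fintype.card ET := Fintype.card_pos_iff.2 ⟨e⟩
  omega

end Conn

theorem flux {W E : Type} [Fintype E] [DecidableEq W]
    (src tgt : E → W) (P : W → Prop) [DecidablePred P] (c : E →₀ ℤ)
    (hc : boundaryMap src tgt c = 0) :
    ∑ e : E, c e * ((if P (tgt e) then (1:ℤ) else 0) - (if P (src e) then 1 else 0)) = 0 := by
  classical
  set φ : (W →₀ ℤ) →ₗ[ℤ] ℤ :=
    Finsupp.linearCombination ℤ (fun w => if P w then (1:ℤ) else 0) with hφ
  have key : φ (boundaryMap src tgt c) = 0 := by rw [hc]; simp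
  rw [boundaryMap, Finsupp.lsum_apply] at key
  rw [map_finsuppSum] at key
  have : ∀ e (n : ℤ), φ (LinearMap.toSpanSingleton ℤ _
      (Finsupp.single (tgt e) 1 - Finsupp.single (src e) 1) n) =
      n * ((if P (tgt e) then (1:ℤ) else 0) - (if P (src e) then 1 else 0)) := by
    intro e n
    rw [LinearMap.toSpanSingleton_apply, map_smul, map_sub,
      Finsupp.linearCombination_single, Finsupp.linearCombination_single]
    simp [smul_eq_mul]
  rw [Finsupp.sum_fintype _ _ (by intro e; simp)] at key
  exact (Finset.sum_congr rfl (fun e _ => (this e (c e)).symm)).trans key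

theorem sum_ladder {srcT tgtT : ET → V} (g : LadderE srcT tgtT → ℤ) :
    ∑ e, g e = ((∑ t : ET, g (Sum.inl (Sum.inl t))) + ∑ t : ET, g (Sum.inl (Sum.inr t)))
      + ∑ σ : (Σ v : V, Fin (3 - degT srcT tgtT v)), g (Sum.inr σ) := by
  show ∑ x : (ET ⊕ ET) ⊕ (Σ v : V, Fin (3 - degT srcT tgtT v)), g x = _
  rw [Fintype.sum_sum_type (f := g), Fintype.sum_sum_type]

theorem sum_vert {srcT tgtT : ET → V}
    (σ₀ σf : Σ v : V, Fin (3 - degT srcT tgtT v)) (hne : σ₀ ≠ σf)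
    (h : (Σ v : V, Fin (3 - degT srcT tgtT v)) → ℤ)
    (hzero : ∀ σ, σ ≠ σ₀ → σ ≠ σf → h σ = 0) :
    ∑ σ : (Σ v : V, Fin (3 - degT srcT tgtT v)), h σ = h σ₀ + h σf := by
  classical
  rw [← Finset.sum_subset (Finset.subset_univ ({σ₀, σf} : Finset _))
    (fun x _ hx => by
      simp only [Finset.mem_insert, Finset.mem_singleton] at hx
      push_neg at hx
      exact hzero x hx.1 hx.2)]
  exact Finset.sum_pair hne

theorem stepA {srcT tgtT : ET → V}
    (σ₀ σf : Σ v : V, Fin (3 - degT srcT tgtT v)) (hne : σ₀ ≠ σf)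
    (c : LadderE srcT tgtT →₀ ℤ)
    (hker : boundaryMap (ladderSrc srcT tgtT) (ladderTgt srcT tgtT) c = 0)
    (hzero : ∀ σ, σ ≠ σ₀ → σ ≠ σf → c (Sum.inr σ) = 0) :
    c (Sum.inr σ₀) + c (Sum.inr σf) = 0 := by
  classical
  have hflux := flux (ladderSrc srcT tgtT) (ladderTgt srcT tgtT)
    (fun p => p.2 = true) c hker
  rw [sum_ladder] at hflux
  have h1 : ∀ t : ET, c (Sum.inl (Sum.inl t)) *
      ((if ((ladderTgt srcT tgtT (Sum.inl (Sum.inl t))).2 = true) then (1:ℤ) else 0) -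
       (if ((ladderSrc srcT tgtT (Sum.inl (Sum.inl t))).2 = true) then 1 else 0)) = 0 := by
    intro t; simp [ladderSrc, ladderTgt]
  have h2 : ∀ t : ET, c (Sum.inl (Sum.inr t)) *
      ((if ((ladderTgt srcT tgtT (Sum.inl (Sum.inr t))).2 = true) then (1:ℤ) else 0) -
       (if ((ladderSrc srcT tgtT (Sum.inl (Sum.inr t))).2 = true) then 1 else 0)) = 0 := by
    intro t; simp [ladderSrc, ladderTgt]
  have h3 : ∀ σ : (Σ v : V, Fin (3 - degT srcT tgtT v)), c (Sum.inr σ) *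
      ((if ((ladderTgt srcT tgtT (Sum.inr σ)).2 = true) then (1:ℤ) else 0) -
       (if ((ladderSrc srcT tgtT (Sum.inr σ)).2 = true) then 1 else 0)) = c (Sum.inr σ) := by
    rintro ⟨v, k⟩; simp [ladderSrc, ladderTgt]
  rw [Finset.sum_congr rfl (fun t _ => h1 t), Finset.sum_congr rfl (fun t _ => h2 t),
    Finset.sum_congr rfl (fun σ _ => h3 σ)] at hflux
  rw [sum_vert σ₀ σf hne _ (fun σ hσ1 hσ2 => hzero σ hσ1 hσ2)] at hflux
  simpa using hflux

open Classical in
theorem stepB {srcT tgtT : ET → V}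
    (hconn : ∀ v w : V, Relation.ReflTransGen
      (fun a b => ∃ f : ET, (srcT f = a ∧ tgtT f = b) ∨ (srcT f = b ∧ tgtT f = a)) v w)
    (hcard : Fintype.card ET + 1 = Fintype.card V)
    (t : ET) (s : Bool)
    (σ₀ σf : Σ v : V, Fin (3 - degT srcT tgtT v)) (hne : σ₀ ≠ σf)
    (c : LadderE srcT tgtT →₀ ℤ)
    (hker : boundaryMap (ladderSrc srcT tgtT) (ladderTgt srcT tgtT) c = 0)
    (hzero : ∀ σ, σ ≠ σ₀ → σ ≠ σf → c (Sum.inr σ) = 0) :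
    c (Sum.inl (cond s (Sum.inr t) (Sum.inl t))) =
      (if s then (-1:ℤ) else 1) *
        ((if MR srcT tgtT (· ≠ t) (tgtT t) σ₀.1 then c (Sum.inr σ₀) else 0) +
         (if MR srcT tgtT (· ≠ t) (tgtT t) σf.1 then c (Sum.inr σf) else 0)) := by
  classical
  set At : V → Prop := fun v => MR srcT tgtT (· ≠ t) (tgtT t) v with hAt
  have hAtgt : At (tgtT t) := Relation.ReflTransGen.refl
  have hAsrc : ¬ At (srcT t) := bridge hconn hcard t
  have hAstep : ∀ t' : ET, t' ≠ t → (At (srcT t') ↔ At (tgtT t')) := by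
    intro t' ht'
    have hstep : MR srcT tgtT (· ≠ t) (srcT t') (tgtT t') :=
      Relation.ReflTransGen.single ⟨t', ht', Or.inl ⟨rfl, rfl⟩⟩
    exact ⟨fun h => h.trans hstep, fun h => h.trans (mr_symm hstep)⟩
  have hflux := flux (ladderSrc srcT tgtT) (ladderTgt srcT tgtT)
    (fun p => p.2 = s ∧ At p.1) c hker
  rw [sum_ladder] at hflux
  beta_reduce at hflux
  -- the sum over the `false` (resp. `true`) copies of the tree
  have hcopy : ∀ (s' : Bool) (mk : ET → LadderE srcT tgtT)
      (hmk : ∀ t', ladderSrc srcT tgtT (mk t') = (srcT t', s') ∧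
        ladderTgt srcT tgtT (mk t') = (tgtT t', s')),
      ∑ t' : ET, c (mk t') *
        ((if ((ladderTgt srcT tgtT (mk t')).2 = s ∧ At (ladderTgt srcT tgtT (mk t')).1)
            then (1:ℤ) else 0) -
         (if ((ladderSrc srcT tgtT (mk t')).2 = s ∧ At (ladderSrc srcT tgtT (mk t')).1)
            then 1 else 0)) = if s' = s then c (mk t) else 0 := by
    intro s' mk hmk
    have hz : ∀ t' : ET, t' ≠ t → c (mk t') *
        ((if ((ladderTgt srcT tgtT (mk t')).2 = s ∧ At (ladderTgt srcT tgtT (mk t')).1)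
            then (1:ℤ) else 0) -
         (if ((ladderSrc srcT tgtT (mk t')).2 = s ∧ At (ladderSrc srcT tgtT (mk t')).1)
            then 1 else 0)) = 0 := by
      intro t' ht'
      rw [(hmk t').1, (hmk t').2]
      by_cases hs' : s' = s
      · by_cases h : At (srcT t')
        · simp [hs', h, (hAstep t' ht').1 h]
        · have h2 : ¬ At (tgtT t') := fun hc => h ((hAstep t' ht').2 hc)
          simp [hs', h, h2]
      · simp [hs']
    rw [Finset.sum_eq_single_of_mem t (Finset.mem_univ t) (fun t' _ ht' => hz t' ht')]
    rw [(hmk t).1, (hmk t).2]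
    by_cases hs' : s' = s
    · simp [hs', hAtgt, hAsrc]
    · simp [hs']
  have hc1 := hcopy false (fun t' => Sum.inl (Sum.inl t')) (fun t' => ⟨rfl, rfl⟩)
  have hc2 := hcopy true (fun t' => Sum.inl (Sum.inr t')) (fun t' => ⟨rfl, rfl⟩)
  rw [hc1, hc2] at hflux
  -- the sum over vertical edges
  have h3 : ∀ σ : (Σ v : V, Fin (3 - degT srcT tgtT v)), c (Sum.inr σ) *
      ((if ((ladderTgt srcT tgtT (Sum.inr σ)).2 = s ∧ At (ladderTgt srcT tgtT (Sum.inr σ)).1)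
          then (1:ℤ) else 0) -
       (if ((ladderSrc srcT tgtT (Sum.inr σ)).2 = s ∧ At (ladderSrc srcT tgtT (Sum.inr σ)).1)
          then 1 else 0)) =
      (if s then (1:ℤ) else -1) * (if At σ.1 then c (Sum.inr σ) else 0) := by
    rintro ⟨v, k⟩
    show c (Sum.inr ⟨v, k⟩) * ((if (true = s ∧ At v) then (1:ℤ) else 0) -
      (if (false = s ∧ At v) then 1 else 0)) = _
    cases s <;> by_cases h : At v <;> simp [h] <;> ring
  rw [Finset.sum_congr rfl (fun σ _ => h3 σ), ← Finset.mul_sum,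
    sum_vert σ₀ σf hne _ (fun σ hσ1 hσ2 => by rw [hzero σ hσ1 hσ2]; simp)] at hflux
  cases s <;> simp only [hAt] at hflux ⊢ <;> beta_reduce at hflux ⊢ <;>
    norm_num at hflux ⊢ <;> linarith

end CeresaAux

open CeresaAux in
theorem ladder_edge_pairs_fail_ceresa_condition
    (srcT tgtT : ET → V)
    -- `T` is a tree:
    (hconn : ∀ v w : V, Relation.ReflTransGen
      (fun a b => ∃ f : ET, (srcT f = a ∧ tgtT f = b) ∨ (srcT f = b ∧ tgtT f = a)) v w)
    (hcard : Fintype.card ET + 1 = Fintype.card V)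
    -- of maximal valence 3:
    (hdeg : ∀ v, degT srcT tgtT v ≤ 3)
    -- a 1-valent vertex `v₀` and a vertical edge `e₀` at `v₀`:
    (v₀ : V) (hv₀ : degT srcT tgtT v₀ = 1)
    (e₀ : LadderE srcT tgtT) (he₀ : ∃ k, e₀ = Sum.inr ⟨v₀, k⟩)
    -- the fundamental cycles of the spanning tree `S = E(T) ∪ E(ι(T)) ∪ {e₀}`,
    -- indexed by the remaining vertical edges:
    (γ : ∀ f : LadderE srcT tgtT, ¬(f.isLeft = true ∨ f = e₀) → (LadderE srcT tgtT →₀ ℤ))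
    (hker : ∀ f hf, γ f hf ∈
      LinearMap.ker (boundaryMap (ladderSrc srcT tgtT) (ladderTgt srcT tgtT)))
    (hone : ∀ f hf, γ f hf f = 1)
    (hsupp : ∀ f hf, (((γ f hf).support : Set (LadderE srcT tgtT))) ⊆
      {s | s.isLeft = true ∨ s = e₀} ∪ {f}) :
    -- condition (*) fails for every pair of distinct edges:
    ∀ a b : LadderE srcT tgtT, a ≠ b →
      ¬((∃ f hf, a ∈ (γ f hf).support ∧ b ∈ (γ f hf).support) ∧
        (∃ f hf, a ∈ (γ f hf).support ∧ b ∉ (γ f hf).support) ∧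
        (∃ f hf, b ∈ (γ f hf).support ∧ a ∉ (γ f hf).support)) := by
  classical
  obtain ⟨k₀, he₀'⟩ := he₀
  set σ₀ : Σ v : V, Fin (3 - degT srcT tgtT v) := ⟨v₀, k₀⟩ with hσ₀
  -- the index of a fundamental cycle is a vertical edge distinct from `e₀`
  have vert : ∀ (f : LadderE srcT tgtT), ¬(f.isLeft = true ∨ f = e₀) →
      ∃ σ, f = Sum.inr σ ∧ σ ≠ σ₀ := by
    rintro (x | σ) hf
    · exact absurd (Or.inl rfl) hf
    · exact ⟨σ, rfl, fun h => hf (Or.inr (by rw [h, he₀']))⟩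
  -- vanishing of the other vertical coefficients
  have hzero : ∀ f hf (σf : Σ v : V, Fin (3 - degT srcT tgtT v)), f = Sum.inr σf →
      ∀ σ, σ ≠ σ₀ → σ ≠ σf → γ f hf (Sum.inr σ) = 0 := by
    intro f hf σf hfσ σ h0 h1
    by_contra h
    have hmem : Sum.inr σ ∈ (γ f hf).support := Finsupp.mem_support_iff.2 h
    rcases hsupp f hf hmem with h' | h'
    · rcases h' with h' | h'
      · simp at h'
      · rw [he₀'] at h'
        exact h0 (Sum.inr.inj h')
    · exact h1 (Sum.inr.inj ((show (Sum.inr σ : LadderE srcT tgtT) = f from h').trans hfσ))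
  have hker' : ∀ f hf, boundaryMap (ladderSrc srcT tgtT) (ladderTgt srcT tgtT) (γ f hf) = 0 :=
    fun f hf => LinearMap.mem_ker.1 (hker f hf)
  -- coefficient of `e₀` in every fundamental cycle is `-1`
  have hE0 : ∀ f hf, γ f hf e₀ = -1 := by
    intro f hf
    obtain ⟨σf, hfσ, hσne⟩ := vert f hf
    have hA := stepA σ₀ σf (fun h => hσne h.symm) (γ f hf) (hker' f hf)
      (hzero f hf σf hfσ)
    have h1 : γ f hf (Sum.inr σf) = 1 := by rw [← hfσ]; exact hone f hf
    rw [he₀']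
    linarith
  have memE0 : ∀ f hf, e₀ ∈ (γ f hf).support :=
    fun f hf => Finsupp.mem_support_iff.2 (by rw [hE0 f hf]; norm_num)
  -- membership of a tree edge in a fundamental cycle
  have memTree : ∀ f hf (σf : Σ v : V, Fin (3 - degT srcT tgtT v)), f = Sum.inr σf →
      ∀ (t : ET) (s : Bool),
      ((Sum.inl (cond s (Sum.inr t) (Sum.inl t)) ∈ (γ f hf).support) ↔
        ¬ MR srcT tgtT (· ≠ t) v₀ σf.1) := by
    intro f hf σf hfσ t s
    have hσne : σf ≠ σ₀ := fun h => hf (Or.inr (by rw [hfσ, h, ← he₀']))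
    have hB := stepB hconn hcard t s σ₀ σf (fun h => hσne h.symm) (γ f hf) (hker' f hf)
      (hzero f hf σf hfσ)
    have h1 : γ f hf (Sum.inr σf) = 1 := by rw [← hfσ]; exact hone f hf
    have h0 : γ f hf (Sum.inr σ₀) = -1 := he₀' ▸ hE0 f hf
    rw [h1, h0] at hB
    refine Iff.trans Finsupp.mem_support_iff ?_
    show (γ f hf) (Sum.inl (cond s (Sum.inr t) (Sum.inl t))) ≠ 0 ↔ _
    rw [hB]
    have hv : (σ₀.1 : V) = v₀ := rfl
    rw [hv, ← sep_iff hconn t v₀ σf.1]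
    by_cases hw : MR srcT tgtT (· ≠ t) (tgtT t) σf.1 <;>
      by_cases hu : MR srcT tgtT (· ≠ t) (tgtT t) v₀ <;>
        cases s <;> simp [hw, hu]
  -- the main case analysis
  rintro a b hab ⟨⟨f1, h1, ha1, hb1⟩, ⟨f2, h2, ha2, hb2⟩, ⟨f3, h3, hb3, ha3⟩⟩
  -- helper for the case of a vertical edge
  have vertCase : ∀ (σ : Σ v : V, Fin (3 - degT srcT tgtT v)) f hf,
      Sum.inr σ ≠ e₀ → (Sum.inr σ : LadderE srcT tgtT) ∈ (γ f hf).support →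
      f = Sum.inr σ := by
    intro σ f hf hne hmem
    rcases hsupp f hf hmem with h' | h'
    · rcases h' with h' | h'
      · simp at h'
      · exact absurd h' hne
    · exact h'.symm
  cases a with
  | inr σa =>
    by_cases hae : (Sum.inr σa : LadderE srcT tgtT) = e₀
    · exact ha3 (hae ▸ memE0 f3 h3)
    · have e1 : f1 = Sum.inr σa := vertCase σa f1 h1 hae ha1
      have e2 : f2 = Sum.inr σa := vertCase σa f2 h2 hae ha2
      obtain rfl : f1 = f2 := e1.trans e2.symm
      exact hb2 hb1
  | inl x =>
    cases b with
    | inr σb =>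
      by_cases hbe : (Sum.inr σb : LadderE srcT tgtT) = e₀
      · exact hb2 (hbe ▸ memE0 f2 h2)
      · have e1 : f1 = Sum.inr σb := vertCase σb f1 h1 hbe hb1
        have e3 : f3 = Sum.inr σb := vertCase σb f3 h3 hbe hb3
        obtain rfl : f1 = f3 := e1.trans e3.symm
        exact ha3 ha1
    | inl y =>
      obtain ⟨ta, sa, rfl⟩ : ∃ t s, x = cond s (Sum.inr t) (Sum.inl t) := by
        cases x with
        | inl t => exact ⟨t, false, rfl⟩
        | inr t => exact ⟨t, true, rfl⟩
      obtain ⟨tb, sb, rfl⟩ : ∃ t s, y = cond s (Sum.inr t) (Sum.inl t) := by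
        cases y with
        | inl t => exact ⟨t, false, rfl⟩
        | inr t => exact ⟨t, true, rfl⟩
      obtain ⟨σ1, hfσ1, -⟩ := vert f1 h1
      obtain ⟨σ2, hfσ2, -⟩ := vert f2 h2
      obtain ⟨σ3, hfσ3, -⟩ := vert f3 h3
      have Sa1 := (memTree f1 h1 σ1 hfσ1 ta sa).1 ha1
      have Sb1 := (memTree f1 h1 σ1 hfσ1 tb sb).1 hb1
      have Sa2 := (memTree f2 h2 σ2 hfσ2 ta sa).1 ha2
      have Sb2 : MR srcT tgtT (· ≠ tb) v₀ σ2.1 :=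
        not_not.1 fun hsep => hb2 ((memTree f2 h2 σ2 hfσ2 tb sb).2 hsep)
      have Sb3 := (memTree f3 h3 σ3 hfσ3 tb sb).1 hb3
      have Sa3 : MR srcT tgtT (· ≠ ta) v₀ σ3.1 :=
        not_not.1 fun hsep => ha3 ((memTree f3 h3 σ3 hfσ3 ta sa).2 hsep)
      by_cases htt : ta = tb
      · subst htt
        exact Sa2 Sb2
      · exact laminar hconn v₀ Sa1 Sb1 Sa2 Sb2 Sa3 Sb3

end Ladder
end
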